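/- Let A and B be finite-dimensional algebras over a field k graded by abelian groups Γ₁, Γ₂, with twisted tensor product A⊗^tB with respect to a bicharacter t. Then there is an isomorphism of graded A⊗^tB-modules Hom_k(A⊗^tB, k) ≅ Hom_k(A,k) ⊗^t Hom_k(B,k). -/

import Mathlib

/-!
STATEMENT 17: Let `A` and `B` be finite dimensional algebras over a field `k`
graded by abelian groups `Γ₁`, `Γ₂`, with twisted tensor product `A ⊗^t B`
with respect to a bicharacter `t`.  Then there is an isomorphism of graded
`A ⊗^t B`-modules `Hom_k(A ⊗^t B, k) ≅ Hom_k(A, k) ⊗^t Hom_k(B, k)`.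

Everything is phrased in terms of homogeneous components: the graded algebras
are given as families of finite dimensional `k`-vector spaces with bilinear
multiplication maps; the dual `D(X)` has components `D(X)_γ = Hom_k(X_{-γ},k)`;
the right `A ⊗^t B`-module structure on `D(A ⊗^t B)` is `(φ·c)(x) = φ(c·x)`
(using the twisted multiplication), and on `D(A) ⊗^t D(B)` it is the twisted
action `(m ⊗ n)(a ⊗ b) = t(|a|,|n|)(ma ⊗ nb)` with `(m·a)(x) = m(ax)`.  An
isomorphism of graded modules is a family of `k`-linear equivalences in each
degree intertwining the actions of all homogeneous elements.
-/

open scoped TensorProduct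

universe u

/-- Transport along an equality of degrees, as a linear map. -/
noncomputable def lcast {k : Type u} [Field k] {Γ : Type u}
    {F : Γ → Type u} [∀ γ, AddCommGroup (F γ)] [∀ γ, Module k (F γ)]
    {γ γ' : Γ} (h : γ = γ') : F γ →ₗ[k] F γ' := by
  subst h; exact LinearMap.id

/-!
The dual of a tensor product of finite-dimensional spaces is the tensor product of the duals
(`TensorProduct.dualDistribEquiv`), naturally in both factors. This identification does not
intertwine the two actions on the nose: they differ by the bicharacter factors
`t(-|x|, |b|)` and `t(|a|, |n|)`. Rescaling the identification in degree `p` by `t(p₁, p₂)`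
absorbs the difference, because bimultiplicativity of `t` turns
`t(p₁ + q₁, p₂ + q₂) t(-(p₁ + q₁), q₂)` into `t(q₁, p₂) t(p₁, p₂)`.
-/

namespace TensorProduct

variable {R M N M' N' : Type*} [CommSemiring R]
  [AddCommMonoid M] [AddCommMonoid N] [AddCommMonoid M'] [AddCommMonoid N']
  [Module R M] [Module R N] [Module R M'] [Module R N']

theorem dualDistrib_comp_map_dualMap (f : M →ₗ[R] M') (g : N →ₗ[R] N') :
    dualDistrib R M N ∘ₗ map f.dualMap g.dualMap = (map f g).dualMap ∘ₗ dualDistrib R M' N' := by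
  ext φ ψ m n
  simp

theorem dualDistribEquiv_symm_dualMap_map
    [Module.Free R M] [Module.Free R N] [Module.Free R M'] [Module.Free R N']
    [Module.Finite R M] [Module.Finite R N] [Module.Finite R M'] [Module.Finite R N']
    (f : M →ₗ[R] M') (g : N →ₗ[R] N') (φ : Module.Dual R (M' ⊗[R] N')) :
    (dualDistribEquiv R M N).symm ((map f g).dualMap φ) =
      map f.dualMap g.dualMap ((dualDistribEquiv R M' N').symm φ) := by
  rw [LinearEquiv.symm_apply_eq]
  obtain ⟨ψ, rfl⟩ := (dualDistribEquiv R M' N').surjective φ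
  rw [LinearEquiv.symm_apply_apply]
  exact (LinearMap.congr_fun (dualDistrib_comp_map_dualMap f g) ψ).symm

end TensorProduct

section Bicharacter

variable {Γ₁ Γ₂ G : Type*} [AddCommGroup Γ₁] [CommGroup G] {t : Γ₁ → Γ₂ → G}

theorem bicharacter_neg_left (ht₀ : ∀ y, t 0 y = 1)
    (htadd : ∀ x x' y, t (x + x') y = t x y * t x' y) (x : Γ₁) (y : Γ₂) :
    t (-x) y = (t x y)⁻¹ := by
  rw [eq_inv_iff_mul_eq_one, ← htadd, neg_add_cancel, ht₀]

theorem bicharacter_add_add_mul_neg [AddCommGroup Γ₂] (ht₀ : ∀ y, t 0 y = 1)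
    (htadd : ∀ x x' y, t (x + x') y = t x y * t x' y)
    (htadd' : ∀ x y y', t x (y + y') = t x y * t x y') (x x' : Γ₁) (y y' : Γ₂) :
    t (x + x') (y + y') * t (-(x + x')) y' = t x' y * t x y := by
  rw [bicharacter_neg_left ht₀ htadd, htadd', mul_inv_cancel_right, htadd, mul_comm]

end Bicharacter

theorem dual_of_twisted_tensor_product_iso
    (k : Type u) [Field k]
    (Γ₁ Γ₂ : Type u) [AddCommGroup Γ₁] [AddCommGroup Γ₂]
    (A : Γ₁ → Type u) [∀ γ, AddCommGroup (A γ)] [∀ γ, Module k (A γ)]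
    [∀ γ, FiniteDimensional k (A γ)]
    (B : Γ₂ → Type u) [∀ γ, AddCommGroup (B γ)] [∀ γ, Module k (B γ)]
    [∀ γ, FiniteDimensional k (B γ)]
    -- graded multiplications on `A` and `B`, associative (up to the canonical
    -- identification of degrees)
    (mulA : ∀ γ γ' : Γ₁, A γ →ₗ[k] A γ' →ₗ[k] A (γ + γ'))
    (mulB : ∀ γ γ' : Γ₂, B γ →ₗ[k] B γ' →ₗ[k] B (γ + γ'))
    -- a bicharacter `t : Γ₁ × Γ₂ → k^×`
    (t : Γ₁ → Γ₂ → kˣ)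
    (ht₀ : ∀ γ₂, t 0 γ₂ = 1)
    (htadd : ∀ γ₁ γ₁' γ₂, t (γ₁ + γ₁') γ₂ = t γ₁ γ₂ * t γ₁' γ₂)
    (htadd' : ∀ γ₁ γ₂ γ₂', t γ₁ (γ₂ + γ₂') = t γ₁ γ₂ * t γ₁ γ₂') :
    -- there is a family of `k`-linear equivalences
    -- `D(A ⊗^t B)_p ≃ (D(A) ⊗^t D(B))_p` ...
    ∃ e : ∀ p : Γ₁ × Γ₂,
      Module.Dual k (A (-p.1) ⊗[k] B (-p.2)) ≃ₗ[k]
        (Module.Dual k (A (-p.1)) ⊗[k] Module.Dual k (B (-p.2))),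
      -- ... intertwining the right actions of all homogeneous elements
      -- `a ⊗ b` of `A ⊗^t B`:
      ∀ (p q : Γ₁ × Γ₂) (a : A q.1) (b : B q.2)
        (φ : Module.Dual k (A (-p.1) ⊗[k] B (-p.2))),
        e (p + q)
          -- the action `φ · (a ⊗ b)` on the dual of the twisted tensor
          -- algebra, `(φ·(a⊗b))(x ⊗ y) = t(|x|,|b|) φ((ax) ⊗ (by))`:
          ((t (-(p.1 + q.1)) q.2 : k) •
            (LinearMap.dualMap
              (TensorProduct.map
                ((lcast (k := k) (F := A) (by abel :
                    q.1 + -(p.1 + q.1) = -p.1)).comp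
                  (mulA q.1 (-(p.1 + q.1)) a))
                ((lcast (k := k) (F := B) (by abel :
                    q.2 + -(p.2 + q.2) = -p.2)).comp
                  (mulB q.2 (-(p.2 + q.2)) b))) φ))
        = -- the twisted action `(m ⊗ n)·(a ⊗ b) = t(|a|,|n|)(m·a ⊗ n·b)`
          -- on `D(A) ⊗^t D(B)`, with `(m·a)(x) = m(ax)`:
          (t q.1 p.2 : k) •
            (TensorProduct.map
              (LinearMap.dualMap
                ((lcast (k := k) (F := A) (by abel :
                    q.1 + -(p.1 + q.1) = -p.1)).comp
                  (mulA q.1 (-(p.1 + q.1)) a)))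
              (LinearMap.dualMap
                ((lcast (k := k) (F := B) (by abel :
                    q.2 + -(p.2 + q.2) = -p.2)).comp
                  (mulB q.2 (-(p.2 + q.2)) b)))
              (e p φ)) := by
  refine ⟨fun p => t p.1 p.2 • (TensorProduct.dualDistribEquiv k (A (-p.1)) (B (-p.2))).symm,
    fun p q a b φ => ?_⟩
  simp only [LinearEquiv.smul_apply, Prod.fst_add, Prod.snd_add]
  rw [map_smul, TensorProduct.dualDistribEquiv_symm_dualMap_map, map_smul, smul_smul, smul_smul,
    ← Units.val_mul, ← Units.val_mul, bicharacter_add_add_mul_neg ht₀ htadd htadd']
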